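/- arXiv:2012.03341 — 3 statements merged into one kernel-verified Lean document; each statement's English description precedes it below -/
import Mathlib

section
/- Let f: ℝ → [0,∞) be a nondecreasing right-continuous function vanishing on (−∞,0) and satisfying f(t) = a·t + O(t^α) as t → ∞ for some a > 0 and α ∈ [0,1). Then for every integer-valued function j = j(t) ≥ 1 such that j(t) = o(t^{(1−α)/2}) as t → ∞, the j(t)-fold Lebesgue–Stieltjes convolution power satisfies f^{∗(j(t))}(t) ~ a^{j(t)}·t^{j(t)}/j(t)! as t → ∞. -/
open MeasureTheory Filter Set
open scoped ENNReal NNReal Topology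

noncomputable section

/-- `j`-fold convolution power of a measure on `ℝ` (Dirac mass at `0` for `j = 0`). -/
def convPow (μ : Measure ℝ) : ℕ → Measure ℝ
  | 0 => Measure.dirac 0
  | n + 1 => Measure.map (fun p : ℝ × ℝ => p.1 + p.2) ((convPow μ n).prod μ)

open Classical in
/-- The Lebesgue–Stieltjes measure of a monotone function (junk value `0` otherwise). -/
def lsMeasure (f : ℝ → ℝ) : Measure ℝ :=
  if hf : Monotone f then hf.stieltjesFunction.measure else 0

/-- The `j`-fold Lebesgue–Stieltjes convolution power `f^{∗(j)}(t)` of a nondecreasing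
right-continuous function `f` vanishing on the negative half-line. -/
def convPowFun (f : ℝ → ℝ) (j : ℕ) (t : ℝ) : ℝ :=
  ((convPow (lsMeasure f) j) (Iic t)).toReal

/-!
On `[0, t]` the error `|f s - a s|` is at most `a δ` with `δ = O(t^α)`, so on `(-∞, t]` the
distribution function `f` of the Lebesgue–Stieltjes measure lies between those of `a · Lebesgue`
restricted to `[δ, ∞)` and to `[-δ, ∞)`. Convolution powers preserve this order on `(-∞, t]`, and
the `j`-th power of `a · Lebesgue` on `[c, ∞)` has distribution function `a^j ((s - j c)⁺)^j / j!`.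
Hence `f^{∗j}(t) / (a^j t^j / j!)` lies between `(1 - jδ/t)^j ≥ 1 - j²δ/t` and
`(1 + jδ/t)^j ≤ exp (j²δ/t)`, and `j²δ/t → 0` by the growth condition on `j`.
-/

lemma conv_Iic (μ ν : Measure ℝ) [SFinite ν] (t : ℝ) :
    (μ ∗ ν) (Iic t) = ∫⁻ x, ν (Iic (t - x)) ∂μ := by
  rw [Measure.conv, Measure.map_apply measurable_add measurableSet_Iic,
    Measure.prod_apply (measurable_add measurableSet_Iic)]
  congr! 3 with x
  ext y
  simp [le_sub_iff_add_le']

lemma ae_nonneg_conv {μ ν : Measure ℝ} [SFinite ν] (hμ : ∀ᵐ x ∂μ, 0 ≤ x) (hν : ∀ᵐ x ∂ν, 0 ≤ x) :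
    ∀ᵐ x ∂(μ ∗ ν), 0 ≤ x := by
  refine (ae_map_iff measurable_add.aemeasurable measurableSet_Ici).2 ?_
  filter_upwards [Measure.quasiMeasurePreserving_fst.ae hμ,
    Measure.quasiMeasurePreserving_snd.ae hν] with p hx hy
  exact add_nonneg hx hy

section convPow

variable {μ ν : Measure ℝ}

lemma convPow_succ (μ : Measure ℝ) (n : ℕ) : convPow μ (n + 1) = convPow μ n ∗ μ := rfl

instance sFinite_convPow [SFinite μ] (n : ℕ) : SFinite (convPow μ n) := by
  induction n with
  | zero => exact inferInstanceAs (SFinite (Measure.dirac 0))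
  | succ n _ => rw [convPow_succ]; infer_instance

lemma ae_nonneg_convPow [SFinite μ] (hμ : ∀ᵐ x ∂μ, 0 ≤ x) (n : ℕ) :
    ∀ᵐ x ∂(convPow μ n), 0 ≤ x := by
  induction n with
  | zero => exact (ae_dirac_iff measurableSet_Ici).2 le_rfl
  | succ n ih => exact ae_nonneg_conv ih hμ

lemma convPow_succ_Iic [SFinite μ] (n : ℕ) (t : ℝ) :
    convPow μ (n + 1) (Iic t) = ∫⁻ x, μ (Iic (t - x)) ∂convPow μ n :=
  conv_Iic _ _ t

lemma convPow_succ_Iic' [SFinite μ] (n : ℕ) (t : ℝ) :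
    convPow μ (n + 1) (Iic t) = ∫⁻ y, convPow μ n (Iic (t - y)) ∂μ := by
  rw [convPow_succ, Measure.conv_comm, conv_Iic]

lemma convPow_Iic_mono [SFinite μ] [SFinite ν] (h : ∀ s, μ (Iic s) ≤ ν (Iic s)) (n : ℕ) (t : ℝ) :
    convPow μ n (Iic t) ≤ convPow ν n (Iic t) := by
  induction n generalizing t with
  | zero => exact le_rfl
  | succ n ih =>
    calc convPow μ (n + 1) (Iic t) = ∫⁻ x, μ (Iic (t - x)) ∂convPow μ n := convPow_succ_Iic n t
      _ ≤ ∫⁻ x, ν (Iic (t - x)) ∂convPow μ n := lintegral_mono fun x => h _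
      _ = ∫⁻ y, convPow μ n (Iic (t - y)) ∂ν := by rw [← conv_Iic, Measure.conv_comm, conv_Iic]
      _ ≤ ∫⁻ y, convPow ν n (Iic (t - y)) ∂ν := lintegral_mono fun y => ih _
      _ = convPow ν (n + 1) (Iic t) := (convPow_succ_Iic' n t).symm

lemma convPow_restrict_Iic_Iic [SFinite μ] (hμ : ∀ᵐ x ∂μ, 0 ≤ x) {s t : ℝ} (hst : s ≤ t)
    (n : ℕ) : convPow (μ.restrict (Iic t)) n (Iic s) = convPow μ n (Iic s) := by
  induction n generalizing s with
  | zero => rfl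
  | succ n ih =>
    have hμt : ∀ᵐ x ∂convPow (μ.restrict (Iic t)) n, 0 ≤ x :=
      ae_nonneg_convPow (ae_restrict_of_ae hμ) n
    calc convPow (μ.restrict (Iic t)) (n + 1) (Iic s)
        = ∫⁻ x, μ (Iic (s - x)) ∂convPow (μ.restrict (Iic t)) n := by
          rw [convPow_succ_Iic]
          refine lintegral_congr_ae ?_
          filter_upwards [hμt] with x hx
          rw [Measure.restrict_apply measurableSet_Iic, Iic_inter_Iic,
            min_eq_left (by linarith)]
      _ = ∫⁻ y, convPow (μ.restrict (Iic t)) n (Iic (s - y)) ∂μ := by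
          rw [← conv_Iic, Measure.conv_comm, conv_Iic]
      _ = ∫⁻ y, convPow μ n (Iic (s - y)) ∂μ :=
          lintegral_congr_ae (hμ.mono fun y hy => ih (by linarith))
      _ = convPow μ (n + 1) (Iic s) := (convPow_succ_Iic' n s).symm

lemma convPow_Iic_le_of_forall_le [SFinite μ] [SFinite ν] (hμ : ∀ᵐ x ∂μ, 0 ≤ x) {t : ℝ}
    (h : ∀ s ≤ t, μ (Iic s) ≤ ν (Iic s)) (n : ℕ) :
    convPow μ n (Iic t) ≤ convPow ν n (Iic t) := by
  rw [← convPow_restrict_Iic_Iic hμ le_rfl]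
  refine convPow_Iic_mono (fun s => ?_) n t
  rw [Measure.restrict_apply measurableSet_Iic, Iic_inter_Iic]
  exact (h _ (min_le_right s t)).trans (measure_mono (Iic_subset_Iic.2 (min_le_left s t)))

end convPow

lemma lintegral_Ici_indicator_Iic_pow (δ s : ℝ) (n : ℕ) :
    ∫⁻ y in Ici δ, (Iic s).indicator (fun y => ENNReal.ofReal ((s - y) ^ n)) y
      = if δ ≤ s then ENNReal.ofReal ((s - δ) ^ (n + 1) / (n + 1)) else 0 := by
  rw [lintegral_indicator measurableSet_Iic, Measure.restrict_restrict measurableSet_Iic,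
    Iic_inter_Ici]
  split_ifs with hδs
  · have hint : IntegrableOn (fun y => (s - y) ^ n) (Icc δ s) :=
      (by fun_prop : Continuous fun y => (s - y) ^ n).integrableOn_Icc
    rw [← ofReal_integral_eq_lintegral_ofReal hint, integral_Icc_eq_integral_Ioc,
      ← intervalIntegral.integral_of_le hδs, intervalIntegral.integral_comp_sub_left
        (fun x => x ^ n) s, integral_pow, sub_self, zero_pow n.succ_ne_zero, sub_zero]
    filter_upwards [ae_restrict_mem measurableSet_Icc] with y hy
    exact pow_nonneg (sub_nonneg.2 hy.2) n
  · rw [Icc_eq_empty hδs, Measure.restrict_empty, lintegral_zero_measure]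

def rampMeasure (a δ : ℝ) : Measure ℝ := ENNReal.ofReal a • volume.restrict (Ici δ)

instance sFinite_rampMeasure (a δ : ℝ) : SFinite (rampMeasure a δ) := by
  unfold rampMeasure; infer_instance

lemma rampMeasure_Iic {a : ℝ} (ha : 0 ≤ a) (δ s : ℝ) :
    rampMeasure a δ (Iic s) = ENNReal.ofReal (a * (s - δ)) := by
  rw [rampMeasure, Measure.smul_apply, Measure.restrict_apply measurableSet_Iic, Iic_inter_Ici,
    Real.volume_Icc, smul_eq_mul, ← ENNReal.ofReal_mul ha]

lemma ae_nonneg_rampMeasure (a : ℝ) {δ : ℝ} (hδ : 0 ≤ δ) : ∀ᵐ x ∂rampMeasure a δ, 0 ≤ x :=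
  Measure.ae_smul_measure ((ae_restrict_mem measurableSet_Ici).mono fun _ hx => hδ.trans hx) _

lemma convPow_rampMeasure_Iic {a : ℝ} (ha : 0 ≤ a) (δ : ℝ) (n : ℕ) (t : ℝ) :
    convPow (rampMeasure a δ) n (Iic t)
      = if n * δ ≤ t then ENNReal.ofReal (a ^ n * (t - n * δ) ^ n / n.factorial) else 0 := by
  induction n generalizing t with
  | zero => simp [convPow, Measure.dirac_apply' _ measurableSet_Iic, indicator_apply]
  | succ n ih =>
    have hint : ∀ y, convPow (rampMeasure a δ) n (Iic (t - y))
        = ENNReal.ofReal (a ^ n / n.factorial)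
          * (Iic (t - n * δ)).indicator (fun y => ENNReal.ofReal ((t - n * δ - y) ^ n)) y := by
      intro y
      rw [ih]
      by_cases hy : y ≤ t - n * δ
      · rw [if_pos (le_sub_comm.1 hy), indicator_of_mem (mem_Iic.2 hy),
          ← ENNReal.ofReal_mul (by positivity)]
        ring_nf
      · rw [if_neg (mt le_sub_comm.1 hy), indicator_of_notMem (mt mem_Iic.1 hy), mul_zero]
    rw [convPow_succ_Iic']
    simp_rw [hint]
    rw [rampMeasure, lintegral_smul_measure, lintegral_const_mul' _ _ ENNReal.ofReal_ne_top,
      lintegral_Ici_indicator_Iic_pow]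
    have hcond : δ ≤ t - n * δ ↔ ((n + 1 : ℕ) : ℝ) * δ ≤ t := by
      push_cast
      constructor <;> intro <;> linarith
    simp only [hcond, smul_eq_mul, mul_ite, mul_zero]
    split_ifs
    · rw [← ENNReal.ofReal_mul (by positivity), ← ENNReal.ofReal_mul ha, Nat.factorial_succ]
      congr 1
      push_cast
      field_simp
      ring
    · rfl

instance sFinite_lsMeasure (f : ℝ → ℝ) : SFinite (lsMeasure f) := by
  unfold lsMeasure; split <;> infer_instance

lemma lsMeasure_eq_measure {f : ℝ → ℝ} (hmono : Monotone f)
    (hrc : ∀ x, ContinuousWithinAt f (Ici x) x) :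
    lsMeasure f = StieltjesFunction.measure ⟨f, hmono, hrc⟩ := by
  rw [lsMeasure, dif_pos hmono]
  congr 1
  ext x
  rw [hmono.stieltjesFunction_eq]
  exact hmono.continuousWithinAt_Ioi_iff_rightLim_eq.1 ((hrc x).mono Ioi_subset_Ici_self)

lemma tendsto_atBot_of_eq_zero_of_neg {f : ℝ → ℝ} (hneg : ∀ t < (0 : ℝ), f t = 0) :
    Tendsto f atBot (𝓝 0) :=
  tendsto_const_nhds.congr' <| (eventually_lt_atBot 0).mono fun x hx => (hneg x hx).symm

lemma lsMeasure_Iic {f : ℝ → ℝ} (hmono : Monotone f)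
    (hrc : ∀ x, ContinuousWithinAt f (Ici x) x) (hneg : ∀ t < (0 : ℝ), f t = 0) (s : ℝ) :
    lsMeasure f (Iic s) = ENNReal.ofReal (f s) := by
  rw [lsMeasure_eq_measure hmono hrc,
    StieltjesFunction.measure_Iic _ (tendsto_atBot_of_eq_zero_of_neg hneg)]
  simp

lemma ae_nonneg_lsMeasure {f : ℝ → ℝ} (hmono : Monotone f)
    (hrc : ∀ x, ContinuousWithinAt f (Ici x) x) (hneg : ∀ t < (0 : ℝ), f t = 0) :
    ∀ᵐ x ∂lsMeasure f, 0 ≤ x := by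
  have hleft : Function.leftLim f 0 = 0 :=
    leftLim_eq_of_tendsto (tendsto_const_nhds.congr' <|
      eventually_nhdsWithin_of_forall fun x hx => (hneg x hx).symm)
  simp_rw [ae_iff, not_le, Iio_def]
  rw [lsMeasure_eq_measure hmono hrc,
    StieltjesFunction.measure_Iio _ (tendsto_atBot_of_eq_zero_of_neg hneg)]
  simp [hleft]

lemma convPowFun_mem_Icc {f : ℝ → ℝ} (hmono : Monotone f)
    (hrc : ∀ x, ContinuousWithinAt f (Ici x) x) (hneg : ∀ t < (0 : ℝ), f t = 0)
    {a δ t : ℝ} (ha : 0 ≤ a) (hδ : 0 ≤ δ) (hf : ∀ s ∈ Icc 0 t, |f s - a * s| ≤ a * δ)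
    {m : ℕ} (hmt : m * δ ≤ t) :
    convPowFun f m t ∈ Icc (a ^ m * (t - m * δ) ^ m / m.factorial)
      (a ^ m * (t + m * δ) ^ m / m.factorial) := by
  have hlow : convPow (rampMeasure a δ) m (Iic t) ≤ convPow (lsMeasure f) m (Iic t) := by
    refine convPow_Iic_le_of_forall_le (ae_nonneg_rampMeasure a hδ) (fun s hst => ?_) m
    rw [rampMeasure_Iic ha, lsMeasure_Iic hmono hrc hneg]
    refine ENNReal.ofReal_le_ofReal ?_
    rcases lt_or_ge s 0 with hs | hs
    · rw [hneg s hs]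
      exact mul_nonpos_of_nonneg_of_nonpos ha (by linarith)
    · linarith [(abs_le.1 (hf s ⟨hs, hst⟩)).1]
  have hupp : convPow (lsMeasure f) m (Iic t) ≤ convPow (rampMeasure a (-δ)) m (Iic t) := by
    refine convPow_Iic_le_of_forall_le (ae_nonneg_lsMeasure hmono hrc hneg) (fun s hst => ?_) m
    rw [rampMeasure_Iic ha, lsMeasure_Iic hmono hrc hneg]
    rcases lt_or_ge s 0 with hs | hs
    · simp [hneg s hs]
    · refine ENNReal.ofReal_le_ofReal ?_
      linarith [(abs_le.1 (hf s ⟨hs, hst⟩)).2]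
  have hmδ : 0 ≤ (m : ℝ) * δ := by positivity
  have htmδ : 0 ≤ t + m * δ := by linarith
  rw [convPow_rampMeasure_Iic ha, if_pos hmt] at hlow
  rw [convPow_rampMeasure_Iic ha, if_pos (by linarith), mul_neg, sub_neg_eq_add] at hupp
  exact ⟨(ENNReal.ofReal_le_iff_le_toReal (ne_top_of_le_ne_top ENNReal.ofReal_ne_top hupp)).1 hlow,
    ENNReal.toReal_le_of_le_ofReal (by positivity) hupp⟩

lemma convPowFun_div_mem_Icc {f : ℝ → ℝ} (hmono : Monotone f)
    (hrc : ∀ x, ContinuousWithinAt f (Ici x) x) (hneg : ∀ t < (0 : ℝ), f t = 0)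
    {a δ t : ℝ} (ha : 0 < a) (ht : 0 < t) (hδ : 0 ≤ δ)
    (hf : ∀ s ∈ Icc 0 t, |f s - a * s| ≤ a * δ) {m : ℕ} (hm : m ^ 2 * δ ≤ t) :
    convPowFun f m t / (a ^ m * t ^ m / m.factorial)
      ∈ Icc (1 - m ^ 2 * δ / t) (Real.exp (m ^ 2 * δ / t)) := by
  have hmm : (m : ℝ) ≤ m ^ 2 := by exact_mod_cast Nat.le_self_pow two_ne_zero m
  have hmδ : m * δ ≤ t := (mul_le_mul_of_nonneg_right hmm hδ).trans hm
  obtain ⟨hL, hU⟩ := convPowFun_mem_Icc hmono hrc hneg ha.le hδ hf hmδ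
  have hratio : ∀ c, a ^ m * (t + c) ^ m / m.factorial / (a ^ m * t ^ m / m.factorial)
      = (1 + c / t) ^ m := by
    intro c
    rw [one_add_div ht.ne', div_pow]
    field_simp
  have hden : 0 < a ^ m * t ^ m / m.factorial := by positivity
  constructor
  · calc 1 - m ^ 2 * δ / t = 1 + m * (-(m * δ / t)) := by ring
      _ ≤ (1 + -(m * δ / t)) ^ m := by
          refine one_add_mul_le_pow ?_ m
          have : m * δ / t ≤ 1 := (div_le_one ht).2 hmδ
          linarith
      _ = a ^ m * (t - m * δ) ^ m / m.factorial / (a ^ m * t ^ m / m.factorial) := by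
          rw [sub_eq_add_neg, hratio, neg_div]
      _ ≤ convPowFun f m t / (a ^ m * t ^ m / m.factorial) := by gcongr
  · calc convPowFun f m t / (a ^ m * t ^ m / m.factorial)
        ≤ a ^ m * (t + m * δ) ^ m / m.factorial / (a ^ m * t ^ m / m.factorial) := by gcongr
      _ = (1 + m * δ / t) ^ m := hratio _
      _ ≤ Real.exp (m * δ / t) ^ m := by
          gcongr
          linarith [Real.add_one_le_exp (m * δ / t)]
      _ = Real.exp (m ^ 2 * δ / t) := by
          rw [← Real.exp_nat_mul]
          ring_nf

lemma abs_sub_mul_le_of_monotone {f : ℝ → ℝ} (hmono : Monotone f)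
    (hneg : ∀ t < (0 : ℝ), f t = 0) {a T s : ℝ} (ha : 0 ≤ a) (hs : s ∈ Icc 0 T) :
    |f s - a * s| ≤ f T + a * T := by
  have hfs : 0 ≤ f s := (hneg (-1) (by norm_num)).symm.le.trans (hmono (by linarith [hs.1]))
  have has : a * s ≤ a * T := mul_le_mul_of_nonneg_left hs.2 ha
  have has0 : 0 ≤ a * s := mul_nonneg ha hs.1
  rw [abs_le]
  constructor <;> linarith [hmono hs.2]

lemma exists_abs_le_mul_rpow_of_isBigO {g : ℝ → ℝ} {α : ℝ} (hα : 0 ≤ α)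
    (hg : g =O[atTop] fun t => t ^ α) (hbdd : ∀ T, ∃ B, ∀ s ∈ Icc 0 T, |g s| ≤ B) :
    ∃ C, 0 ≤ C ∧ ∀ t ≥ 1, ∀ s ∈ Icc 0 t, |g s| ≤ C * t ^ α := by
  obtain ⟨C₀, hC₀⟩ := hg.bound
  obtain ⟨s₀, hs₀⟩ := eventually_atTop.1 hC₀
  obtain ⟨B, hB⟩ := hbdd s₀
  refine ⟨|B| + |C₀|, by positivity, fun t ht s hs => ?_⟩
  have hone : 1 ≤ t ^ α := Real.one_le_rpow ht hα
  rcases le_total s s₀ with hss₀ | hs₀s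
  · calc |g s| ≤ |B| * 1 := by rw [mul_one]; exact (hB s ⟨hs.1, hss₀⟩).trans (le_abs_self B)
      _ ≤ (|B| + |C₀|) * t ^ α :=
          mul_le_mul (le_add_of_nonneg_right (abs_nonneg C₀)) hone zero_le_one (by positivity)
  · have hst : s ^ α ≤ t ^ α := Real.rpow_le_rpow hs.1 hs.2 hα
    have hsα : 0 ≤ s ^ α := Real.rpow_nonneg hs.1 α
    have hgs := hs₀ s hs₀s
    rw [Real.norm_eq_abs, Real.norm_eq_abs, abs_of_nonneg hsα] at hgs
    calc |g s| ≤ |C₀| * s ^ α := hgs.trans (mul_le_mul_of_nonneg_right (le_abs_self C₀) hsα)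
      _ ≤ (|B| + |C₀|) * t ^ α :=
          mul_le_mul (le_add_of_nonneg_left (abs_nonneg B)) hst hsα (by positivity)

lemma tendsto_sq_mul_rpow_div_of_isLittleO {u : ℝ → ℝ} {α : ℝ}
    (hu : u =o[atTop] fun t => t ^ ((1 - α) / 2)) :
    Tendsto (fun t => u t ^ 2 * t ^ α / t) atTop (𝓝 0) := by
  have hsq : (fun t => u t ^ 2) =o[atTop] fun t => t ^ (1 - α) := by
    refine (hu.pow two_pos).congr' EventuallyEq.rfl ?_
    filter_upwards [eventually_ge_atTop 0] with t ht
    rw [← Real.rpow_natCast, ← Real.rpow_mul ht]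
    norm_num
  refine hsq.tendsto_div_nhds_zero.congr' ?_
  filter_upwards [eventually_gt_atTop 0] with t ht
  rw [Real.rpow_sub ht, Real.rpow_one, div_div_eq_mul_div]

theorem convolution_powers_linear_growth_general
    (f : ℝ → ℝ) (hmono : Monotone f)
    (hrc : ∀ x, ContinuousWithinAt f (Ici x) x)
    (hneg : ∀ t < (0 : ℝ), f t = 0)
    (a α : ℝ) (ha : 0 < a) (hα0 : 0 ≤ α)
    (hO : (fun t : ℝ => f t - a * t) =O[atTop] fun t : ℝ => t ^ α)
    (j : ℝ → ℕ)
    (hjo : (fun t : ℝ => (j t : ℝ)) =o[atTop] fun t : ℝ => t ^ ((1 - α) / 2)) :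
    Tendsto
      (fun t : ℝ =>
        convPowFun f (j t) t / (a ^ j t * t ^ j t / (Nat.factorial (j t) : ℝ)))
      atTop (𝓝 1) := by
  obtain ⟨C, hC0, hC⟩ := exists_abs_le_mul_rpow_of_isBigO hα0 hO fun T =>
    ⟨f T + a * T, fun s hs => abs_sub_mul_le_of_monotone hmono hneg ha.le hs⟩
  set r : ℝ → ℝ := fun t => (j t : ℝ) ^ 2 * (C * t ^ α / a) / t
  have hr : Tendsto r atTop (𝓝 0) := by
    simpa using ((tendsto_sq_mul_rpow_div_of_isLittleO hjo).const_mul (C / a)).congr fun t => by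
      simp only [r]; ring
  have hbounds : ∀ᶠ t in atTop,
      convPowFun f (j t) t / (a ^ j t * t ^ j t / (Nat.factorial (j t) : ℝ))
        ∈ Icc (1 - r t) (Real.exp (r t)) := by
    filter_upwards [eventually_ge_atTop 1, hr.eventually (eventually_le_nhds one_pos)]
      with t ht hrt
    have ht0 : 0 < t := by linarith
    refine convPowFun_div_mem_Icc hmono hrc hneg ha ht0 (by positivity) (fun s hs => ?_) ?_
    · rw [mul_div_cancel₀ _ ha.ne']
      exact hC t ht s hs
    · exact (div_le_one ht0).1 hrt
  refine tendsto_of_tendsto_of_tendsto_of_le_of_le' ?_ ?_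
    (hbounds.mono fun t h => h.1) (hbounds.mono fun t h => h.2)
  · simpa using hr.const_sub 1
  · exact Real.tendsto_exp_nhds_zero_nhds_one.comp hr

/-- **Proposition 3.1.** Let `f` be nondecreasing, right-continuous, vanishing on the
negative half-line and with `f(t) = a t + O(t^α)`, `a > 0`, `α ∈ [0,1)`. Then for any
integer-valued `j = j(t) ≥ 1` with `j(t) = o(t^{(1-α)/2})`,
`f^{∗(j(t))}(t) ~ a^{j(t)} t^{j(t)} / j(t)!` as `t → ∞`. -/
theorem convolution_powers_linear_growth
    (f : ℝ → ℝ) (hf0 : ∀ t, 0 ≤ f t) (hmono : Monotone f)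
    (hrc : ∀ x, ContinuousWithinAt f (Ici x) x)
    (hneg : ∀ t < (0 : ℝ), f t = 0)
    (a α : ℝ) (ha : 0 < a) (hα0 : 0 ≤ α) (hα1 : α < 1)
    (hO : (fun t : ℝ => f t - a * t) =O[atTop] fun t : ℝ => t ^ α)
    (j : ℝ → ℕ) (hj1 : ∀ t, 1 ≤ j t)
    (hjo : (fun t : ℝ => (j t : ℝ)) =o[atTop] fun t : ℝ => t ^ ((1 - α) / 2)) :
    Tendsto
      (fun t : ℝ =>
        convPowFun f (j t) t / (a ^ j t * t ^ j t / (Nat.factorial (j t) : ℝ)))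
      atTop (𝓝 1) :=
  convolution_powers_linear_growth_general f hmono hrc hneg a α ha hα0 hO j hjo

end
end

section
/- Let (S̃_j)_{j≥0} be a zero-delayed random walk with i.i.d. nonnegative increments (S̃_0 = 0, S̃_j = sum of the first j increments) such that E[S̃_1²] < ∞, and set γ₀ := −E[S̃_1]. Then for every integer-valued function j = j(t) ≥ 1 with j(t) = o(t^{2/3}) as t → ∞, one has E[((t − S̃_{j(t)})₊)^{j(t)}] ~ t^{j(t)}·exp(γ₀·j(t)²/t) as t → ∞. -/
open MeasureTheory ProbabilityTheory Filter Set
open scoped ENNReal NNReal Topology ProbabilityTheory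

noncomputable section

variable {Ω : Type*} [MeasureSpace Ω]

/-- Partial sums `S̃ n = X 0 + ⋯ + X (n-1)` of the increments. -/
def pSum (X : ℕ → Ω → ℝ) (n : ℕ) (ω : Ω) : ℝ := ∑ i ∈ Finset.range n, X i ω

/-!
With `x = S / t` one has `(t - S)₊ⁿ = tⁿ (1 - x)₊ⁿ`, and for `x ≥ 0`
`e^{-n x} - n x² e^{-(n-1) x} ≤ (1 - x)₊ⁿ ≤ e^{-n x}`. Taking `S = S̃ₙ`, the expectation is
therefore `tⁿ φ(n/t)ⁿ` up to an error `n t^{n-2} E[S̃ₙ² e^{-(n-1) S̃ₙ / t}]`, where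
`φ(θ) = E e^{-θ S̃₁}`; independence bounds this tilted second moment by
`n² E[S̃₁²] φ((n-1)/t)^{n-1}`. Finally `1 - θ a ≤ φ(θ) ≤ 1 - θ a + θ² E[S̃₁²]` with
`a = E S̃₁ = -γ₀` gives `φ(m/t)^m e^{a m²/t} → 1` whenever `m = o(t^{2/3})`, all errors being
of order `m³/t²`.
-/

open Real Asymptotics

lemma exp_neg_le_one_sub_add_sq {x : ℝ} (hx : 0 ≤ x) : exp (-x) ≤ 1 - x + x ^ 2 := by
  rw [exp_neg, inv_le_iff_one_le_mul₀ (exp_pos x)]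
  nlinarith [add_one_le_exp x, pow_nonneg hx 3]

lemma max_one_sub_le_exp_neg (x : ℝ) : max (1 - x) 0 ≤ exp (-x) :=
  max_le (one_sub_le_exp_neg x) (exp_pos _).le

lemma exp_neg_pow_sub_le_max_one_sub_pow (n : ℕ) {x : ℝ} (hx : 0 ≤ x) :
    exp (-x) ^ n - n * x ^ 2 * exp (-x) ^ (n - 1) ≤ max (1 - x) 0 ^ n := by
  set b := max (1 - x) 0
  have hb : b ≤ exp (-x) := max_one_sub_le_exp_neg x
  have hgap : exp (-x) - b ≤ x ^ 2 := by
    linarith [le_max_left (1 - x) 0, exp_neg_le_one_sub_add_sq hx]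
  have h := (le_abs_self _).trans (abs_pow_sub_pow_le (exp (-x)) b n)
  rw [abs_of_nonneg (sub_nonneg.2 hb), abs_of_pos (exp_pos _), abs_of_nonneg (le_max_right _ _),
    max_eq_left hb] at h
  have : (exp (-x) - b) * n * exp (-x) ^ (n - 1) ≤ x ^ 2 * n * exp (-x) ^ (n - 1) := by gcongr
  linarith

lemma one_sub_mul_sq_mul_exp_le (n : ℕ) {x : ℝ} (hx : 0 ≤ x) :
    1 - n * x ^ 2 * exp x ≤ max (1 - x) 0 ^ n * exp (n * x) := by
  have hpow : exp (-x) ^ (n - 1) * exp (n * x) ≤ exp x := by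
    rcases n with _ | k
    · simpa using hx
    · rw [Nat.add_sub_cancel, ← exp_nat_mul, ← exp_add]
      exact exp_le_exp.2 (by push_cast; linarith)
  have hone : exp (-x) ^ n * exp (n * x) = 1 := by
    rw [← exp_nat_mul, ← exp_add]; ring_nf; exact exp_zero
  calc 1 - n * x ^ 2 * exp x ≤ 1 - n * x ^ 2 * (exp (-x) ^ (n - 1) * exp (n * x)) := by
        gcongr
    _ = (exp (-x) ^ n - n * x ^ 2 * exp (-x) ^ (n - 1)) * exp (n * x) := by
        rw [sub_mul, hone]; ring
    _ ≤ max (1 - x) 0 ^ n * exp (n * x) := by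
        gcongr; exact exp_neg_pow_sub_le_max_one_sub_pow n hx

lemma max_sub_eq_mul_max_one_sub_div {t : ℝ} (ht : 0 < t) (s : ℝ) :
    max (t - s) 0 = t * max (1 - s / t) 0 := by
  rw [mul_max_of_nonneg _ _ ht.le, mul_zero, mul_one_sub, mul_div_cancel₀ _ ht.ne']

lemma exp_neg_div_pow (n : ℕ) (s t : ℝ) : exp (-(s / t)) ^ n = exp (-(n / t) * s) := by
  rw [← exp_nat_mul]; ring_nf

lemma max_sub_pow_le_mul_exp {t : ℝ} (ht : 0 < t) (n : ℕ) (s : ℝ) :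
    max (t - s) 0 ^ n ≤ t ^ n * exp (-(n / t) * s) := by
  rw [max_sub_eq_mul_max_one_sub_div ht, mul_pow, ← exp_neg_div_pow]
  gcongr
  exact max_one_sub_le_exp_neg _

lemma mul_exp_sub_le_max_sub_pow {t : ℝ} (ht : 0 < t) (n : ℕ) {s : ℝ} (hs : 0 ≤ s) :
    t ^ n * exp (-(n / t) * s) - n * t ^ n / t ^ 2 * (s ^ 2 * exp (-((n - 1 : ℕ) / t) * s))
      ≤ max (t - s) 0 ^ n := by
  have h := mul_le_mul_of_nonneg_left
    (exp_neg_pow_sub_le_max_one_sub_pow n (div_nonneg hs ht.le)) (pow_nonneg ht.le n)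
  rw [exp_neg_div_pow, exp_neg_div_pow] at h
  rw [max_sub_eq_mul_max_one_sub_div ht, mul_pow]
  refine le_of_eq_of_le ?_ h
  field_simp

/- Dropping `x i` from the exponent of the `i`-th summand makes it a product of two
independent factors once the `x i` are independent random variables. -/
lemma sq_sum_mul_exp_neg_le {ι : Type*} [DecidableEq ι] (s : Finset ι) {x : ι → ℝ}
    (hx : ∀ i ∈ s, 0 ≤ x i) {θ : ℝ} (hθ : 0 ≤ θ) :
    (∑ i ∈ s, x i) ^ 2 * exp (-θ * ∑ i ∈ s, x i)
      ≤ s.card * ∑ i ∈ s, x i ^ 2 * exp (-θ * ∑ l ∈ s.erase i, x l) := by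
  calc (∑ i ∈ s, x i) ^ 2 * exp (-θ * ∑ i ∈ s, x i)
      ≤ (s.card * ∑ i ∈ s, x i ^ 2) * exp (-θ * ∑ i ∈ s, x i) := by
        gcongr; exact sq_sum_le_card_mul_sum_sq
    _ = s.card * ∑ i ∈ s, x i ^ 2 * exp (-θ * ∑ i ∈ s, x i) := by
        rw [mul_assoc, Finset.sum_mul]
    _ ≤ s.card * ∑ i ∈ s, x i ^ 2 * exp (-θ * ∑ l ∈ s.erase i, x l) := by
        refine mul_le_mul_of_nonneg_left (Finset.sum_le_sum fun i hi => ?_) (Nat.cast_nonneg _)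
        refine mul_le_mul_of_nonneg_left (exp_le_exp.2 ?_) (sq_nonneg _)
        rw [← Finset.add_sum_erase s x hi]
        nlinarith [mul_nonneg hθ (hx i hi)]

lemma tendsto_div_of_isLittleO_rpow_two_thirds {f : ℝ → ℝ}
    (hf : f =o[atTop] fun t => t ^ (2 / 3 : ℝ)) : Tendsto (fun t => f t / t) atTop (𝓝 0) := by
  refine (hf.trans_isBigO (IsBigO.of_bound 1 ?_)).tendsto_div_nhds_zero
  filter_upwards [eventually_ge_atTop 1] with t ht
  rw [norm_of_nonneg (by positivity), norm_of_nonneg (by linarith), one_mul]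
  exact rpow_le_self_of_one_le ht (by norm_num)

lemma tendsto_pow_three_div_sq_of_isLittleO_rpow_two_thirds {f : ℝ → ℝ}
    (hf : f =o[atTop] fun t => t ^ (2 / 3 : ℝ)) :
    Tendsto (fun t => f t ^ 3 / t ^ 2) atTop (𝓝 0) := by
  refine ((hf.pow three_pos).congr' EventuallyEq.rfl ?_).tendsto_div_nhds_zero
  filter_upwards [eventually_gt_atTop 0] with t ht
  rw [← rpow_natCast, ← rpow_mul ht.le]
  norm_num

lemma tendsto_sq_sub_sq_pred_div {f : ℝ → ℕ}
    (hf : Tendsto (fun t => (f t : ℝ) / t) atTop (𝓝 0)) :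
    Tendsto (fun t => ((f t : ℝ) ^ 2 - ((f t - 1 : ℕ) : ℝ) ^ 2) / t) atTop (𝓝 0) := by
  have hbound (k : ℕ) : 0 ≤ (k : ℝ) ^ 2 - ((k - 1 : ℕ) : ℝ) ^ 2 ∧
      (k : ℝ) ^ 2 - ((k - 1 : ℕ) : ℝ) ^ 2 ≤ 2 * k := by
    rcases k with _ | k
    · simp
    · push_cast [Nat.add_sub_cancel]
      constructor <;> nlinarith [(Nat.cast_nonneg k : (0 : ℝ) ≤ k)]
  refine tendsto_of_tendsto_of_tendsto_of_le_of_le' tendsto_const_nhds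
    (by simpa using hf.const_mul 2) ?_ ?_
  · filter_upwards [eventually_gt_atTop 0] with t ht using div_nonneg (hbound _).1 ht.le
  · filter_upwards [eventually_gt_atTop 0] with t ht
    rw [← mul_div_assoc]
    exact div_le_div_of_nonneg_right (hbound _).2 ht.le

section

variable {μ : Measure Ω}

lemma MeasureTheory.Integrable.mul_exp_neg_mul {f Y : Ω → ℝ} (hf : Integrable f μ)
    (hY : AEMeasurable Y μ) (hY0 : ∀ᵐ ω ∂μ, 0 ≤ Y ω) {θ : ℝ} (hθ : 0 ≤ θ) :
    Integrable (fun ω => f ω * exp (-θ * Y ω)) μ := by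
  refine hf.mul_bdd (hY.const_mul _).exp.aestronglyMeasurable (c := 1) ?_
  filter_upwards [hY0] with ω hω
  rw [norm_of_nonneg (exp_pos _).le, exp_le_one_iff]
  nlinarith

variable [IsProbabilityMeasure μ] {Y : Ω → ℝ}

lemma one_sub_mul_integral_le_mgf_neg (hY0 : ∀ᵐ ω ∂μ, 0 ≤ Y ω) (hY : Integrable Y μ)
    {θ : ℝ} (hθ : 0 ≤ θ) : 1 - θ * ∫ ω, Y ω ∂μ ≤ mgf Y μ (-θ) := by
  have hexp : Integrable (fun ω => exp (-θ * Y ω)) μ := by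
    simpa using (integrable_const 1).mul_exp_neg_mul hY.aemeasurable hY0 hθ
  have hlin : Integrable (fun ω => 1 - θ * Y ω) μ := (integrable_const 1).sub (hY.const_mul θ)
  calc 1 - θ * ∫ ω, Y ω ∂μ = ∫ ω, (1 - θ * Y ω) ∂μ := by
        rw [integral_sub (integrable_const 1) (hY.const_mul θ), integral_const_mul]; simp
    _ ≤ mgf Y μ (-θ) :=
        integral_mono hlin hexp fun ω => by simpa using one_sub_le_exp_neg (θ * Y ω)

lemma mgf_neg_le (hY0 : ∀ᵐ ω ∂μ, 0 ≤ Y ω) (hY2 : MemLp Y 2 μ) {θ : ℝ} (hθ : 0 ≤ θ) :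
    mgf Y μ (-θ) ≤ 1 - θ * (∫ ω, Y ω ∂μ) + θ ^ 2 * ∫ ω, Y ω ^ 2 ∂μ := by
  have hY := hY2.integrable one_le_two
  have hexp : Integrable (fun ω => exp (-θ * Y ω)) μ := by
    simpa using (integrable_const 1).mul_exp_neg_mul hY.aemeasurable hY0 hθ
  have hlin : Integrable (fun ω => 1 - θ * Y ω) μ := (integrable_const 1).sub (hY.const_mul θ)
  have hquad : Integrable (fun ω => θ ^ 2 * Y ω ^ 2) μ := hY2.integrable_sq.const_mul _
  calc mgf Y μ (-θ) ≤ ∫ ω, (1 - θ * Y ω + θ ^ 2 * Y ω ^ 2) ∂μ := by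
        refine integral_mono_ae hexp (hlin.add hquad) ?_
        filter_upwards [hY0] with ω hω
        simpa [mul_pow] using exp_neg_le_one_sub_add_sq (mul_nonneg hθ hω)
    _ = 1 - θ * (∫ ω, Y ω ∂μ) + θ ^ 2 * ∫ ω, Y ω ^ 2 ∂μ := by
        rw [integral_add hlin hquad, integral_sub (integrable_const 1) (hY.const_mul θ),
          integral_const_mul, integral_const_mul]
        simp

lemma one_sub_le_mgf_neg_pow_mul_exp (hY0 : ∀ᵐ ω ∂μ, 0 ≤ Y ω) (hY : Integrable Y μ)
    {θ : ℝ} (hθ : 0 ≤ θ) (m : ℕ) :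
    1 - m * (θ * ∫ ω, Y ω ∂μ) ^ 2 * exp (θ * ∫ ω, Y ω ∂μ)
      ≤ mgf Y μ (-θ) ^ m * exp (m * (θ * ∫ ω, Y ω ∂μ)) := by
  have hmean : 0 ≤ θ * ∫ ω, Y ω ∂μ := mul_nonneg hθ (integral_nonneg_of_ae hY0)
  refine (one_sub_mul_sq_mul_exp_le m hmean).trans ?_
  gcongr
  exact max_le (one_sub_mul_integral_le_mgf_neg hY0 hY hθ) mgf_nonneg

lemma mgf_neg_pow_mul_exp_le (hY0 : ∀ᵐ ω ∂μ, 0 ≤ Y ω) (hY2 : MemLp Y 2 μ) {θ : ℝ}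
    (hθ : 0 ≤ θ) (m : ℕ) :
    mgf Y μ (-θ) ^ m * exp (m * (θ * ∫ ω, Y ω ∂μ))
      ≤ exp (m * (θ ^ 2 * ∫ ω, Y ω ^ 2 ∂μ)) := by
  set c := -(θ * ∫ ω, Y ω ∂μ) + θ ^ 2 * ∫ ω, Y ω ^ 2 ∂μ with hc
  have h : mgf Y μ (-θ) ≤ exp c :=
    (mgf_neg_le hY0 hY2 hθ).trans (by linarith [add_one_le_exp c])
  calc mgf Y μ (-θ) ^ m * exp (m * (θ * ∫ ω, Y ω ∂μ))
      ≤ exp c ^ m * exp (m * (θ * ∫ ω, Y ω ∂μ)) := by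
        gcongr; exact mgf_nonneg
    _ = exp (m * (θ ^ 2 * ∫ ω, Y ω ^ 2 ∂μ)) := by
        rw [← exp_nat_mul, ← exp_add, hc]; ring_nf

lemma tendsto_mgf_neg_div_pow_mul_exp (hY0 : ∀ᵐ ω ∂μ, 0 ≤ Y ω) (hY2 : MemLp Y 2 μ)
    {m : ℝ → ℕ} (hm : (fun t => (m t : ℝ)) =o[atTop] fun t => t ^ (2 / 3 : ℝ)) :
    Tendsto (fun t => mgf Y μ (-(m t / t)) ^ m t * exp ((∫ ω, Y ω ∂μ) * m t ^ 2 / t))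
      atTop (𝓝 1) := by
  have h1 := tendsto_div_of_isLittleO_rpow_two_thirds hm
  have h3 := tendsto_pow_three_div_sq_of_isLittleO_rpow_two_thirds hm
  have hlow : Tendsto (fun t => 1 - (∫ ω, Y ω ∂μ) ^ 2 * (m t ^ 3 / t ^ 2)
      * exp ((∫ ω, Y ω ∂μ) * (m t / t))) atTop (𝓝 1) := by
    simpa using tendsto_const_nhds.sub ((h3.const_mul _).mul (h1.const_mul _).rexp)
  have hup : Tendsto (fun t => exp ((∫ ω, Y ω ^ 2 ∂μ) * (m t ^ 3 / t ^ 2))) atTop (𝓝 1) := by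
    simpa using (h3.const_mul _).rexp
  refine tendsto_of_tendsto_of_tendsto_of_le_of_le' hlow hup ?_ ?_
  · filter_upwards [eventually_gt_atTop 0] with t ht
    exact le_of_eq_of_le (by ring_nf) ((one_sub_le_mgf_neg_pow_mul_exp hY0
      (hY2.integrable one_le_two) (θ := m t / t) (by positivity) (m t)).trans_eq (by ring_nf))
  · filter_upwards [eventually_gt_atTop 0] with t ht
    exact le_of_eq_of_le (by ring_nf)
      ((mgf_neg_pow_mul_exp_le hY0 hY2 (θ := m t / t) (by positivity) (m t)).trans_eq
        (by ring_nf))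

end

section

variable {μ : Measure Ω} {X : ℕ → Ω → ℝ}

lemma ae_sum_nonneg (hX0 : ∀ k, ∀ᵐ ω ∂μ, 0 ≤ X k ω) (s : Finset ℕ) :
    ∀ᵐ ω ∂μ, 0 ≤ ∑ i ∈ s, X i ω := by
  filter_upwards [ae_all_iff.2 hX0] with ω hω using Finset.sum_nonneg fun i _ => hω i

lemma mgf_sum_eq_pow (hiid : iIndepFun X μ) (hid : ∀ k, IdentDistrib (X k) (X 0) μ μ)
    (s : Finset ℕ) (θ : ℝ) :
    mgf (fun ω => ∑ i ∈ s, X i ω) μ θ = mgf (X 0) μ θ ^ s.card := by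
  have hfun : (fun ω => ∑ i ∈ s, X i ω) = ∑ i ∈ s, X i := by ext; simp
  rw [hfun, hiid.mgf_sum₀ fun k => (hid k).aemeasurable_fst, ← Finset.prod_const]
  exact Finset.prod_congr rfl fun i _ => congrFun (mgf_congr_identDistrib (hid i)) θ

lemma mgf_pSum (hiid : iIndepFun X μ) (hid : ∀ k, IdentDistrib (X k) (X 0) μ μ) (n : ℕ)
    (θ : ℝ) : mgf (pSum X n) μ θ = mgf (X 0) μ θ ^ n := by
  have h := mgf_sum_eq_pow hiid hid (Finset.range n) θ
  rwa [Finset.card_range] at h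

lemma integral_sq_mul_exp_neg_mul_sum_of_notMem (hiid : iIndepFun X μ)
    (hid : ∀ k, IdentDistrib (X k) (X 0) μ μ) {s : Finset ℕ} {i : ℕ} (hi : i ∉ s) (θ : ℝ) :
    ∫ ω, X i ω ^ 2 * exp (-θ * ∑ l ∈ s, X l ω) ∂μ
      = (∫ ω, X 0 ω ^ 2 ∂μ) * mgf (X 0) μ (-θ) ^ s.card := by
  have hae : ∀ k, AEMeasurable (X k) μ := fun k => (hid k).aemeasurable_fst
  have hindep := (hiid.indepFun_finsetSum_of_notMem₀ hae hi).symm.comp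
    (measurable_id.pow_const 2) (measurable_id.const_mul (-θ)).exp
  have hmul := hindep.integral_fun_mul_eq_mul_integral
    ((hae i).pow_const 2).aestronglyMeasurable
    ((Finset.aemeasurable_sum s fun l _ => hae l).const_mul (-θ)).exp.aestronglyMeasurable
  simp only [Function.comp_def, id, Finset.sum_apply] at hmul
  rw [hmul, ← mgf_sum_eq_pow hiid hid]
  exact congrArg₂ (· * ·) ((hid i).comp (measurable_id.pow_const 2)).integral_eq rfl

lemma integral_sq_pSum_mul_exp_neg_le (hiid : iIndepFun X μ)
    (hid : ∀ k, IdentDistrib (X k) (X 0) μ μ) (hX0 : ∀ k, ∀ᵐ ω ∂μ, 0 ≤ X k ω)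
    (hX2 : MemLp (X 0) 2 μ) (n : ℕ) {θ : ℝ} (hθ : 0 ≤ θ) :
    ∫ ω, pSum X n ω ^ 2 * exp (-θ * pSum X n ω) ∂μ
      ≤ n ^ 2 * (∫ ω, X 0 ω ^ 2 ∂μ) * mgf (X 0) μ (-θ) ^ (n - 1) := by
  have hint : ∀ i ∈ Finset.range n, Integrable
      (fun ω => X i ω ^ 2 * exp (-θ * ∑ l ∈ (Finset.range n).erase i, X l ω)) μ := fun i _ =>
    ((hid i).memLp_iff.2 hX2).integrable_sq.mul_exp_neg_mul
      (Finset.aemeasurable_fun_sum _ fun l _ => (hid l).aemeasurable_fst) (ae_sum_nonneg hX0 _) hθ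
  calc ∫ ω, pSum X n ω ^ 2 * exp (-θ * pSum X n ω) ∂μ
      ≤ ∫ ω, n * ∑ i ∈ Finset.range n,
          X i ω ^ 2 * exp (-θ * ∑ l ∈ (Finset.range n).erase i, X l ω) ∂μ := by
        refine integral_mono_of_nonneg (ae_of_all _ fun ω => by positivity)
          ((integrable_finsetSum _ hint).const_mul _) ?_
        filter_upwards [ae_all_iff.2 hX0] with ω hω
        simpa [pSum] using sq_sum_mul_exp_neg_le (Finset.range n) (fun i _ => hω i) hθ
    _ = n * ∑ i ∈ Finset.range n, (∫ ω, X 0 ω ^ 2 ∂μ) * mgf (X 0) μ (-θ) ^ (n - 1) := by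
        rw [integral_const_mul, integral_finsetSum _ hint]
        refine congrArg _ (Finset.sum_congr rfl fun i hi => ?_)
        rw [integral_sq_mul_exp_neg_mul_sum_of_notMem hiid hid (Finset.notMem_erase i _),
          Finset.card_erase_of_mem hi, Finset.card_range]
    _ = n ^ 2 * (∫ ω, X 0 ω ^ 2 ∂μ) * mgf (X 0) μ (-θ) ^ (n - 1) := by
        rw [Finset.sum_const, Finset.card_range, nsmul_eq_mul]; ring

lemma integral_max_sub_pSum_pow_le (hiid : iIndepFun X μ)
    (hid : ∀ k, IdentDistrib (X k) (X 0) μ μ) (hX0 : ∀ k, ∀ᵐ ω ∂μ, 0 ≤ X k ω)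
    {t : ℝ} (ht : 0 < t) (n : ℕ) :
    ∫ ω, max (t - pSum X n ω) 0 ^ n ∂μ ≤ t ^ n * mgf (X 0) μ (-(n / t)) ^ n := by
  have := hiid.isProbabilityMeasure
  have hS : AEMeasurable (pSum X n) μ :=
    Finset.aemeasurable_fun_sum _ fun i _ => (hid i).aemeasurable_fst
  calc ∫ ω, max (t - pSum X n ω) 0 ^ n ∂μ
      ≤ ∫ ω, t ^ n * exp (-(n / t) * pSum X n ω) ∂μ :=
        integral_mono_of_nonneg (ae_of_all _ fun ω => by positivity)
          ((integrable_const _).mul_exp_neg_mul hS (ae_sum_nonneg hX0 _) (by positivity))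
          (ae_of_all _ fun ω => max_sub_pow_le_mul_exp ht n _)
    _ = t ^ n * mgf (X 0) μ (-(n / t)) ^ n := by
        rw [integral_const_mul, ← mgf_pSum hiid hid]; rfl

lemma le_integral_max_sub_pSum_pow (hiid : iIndepFun X μ)
    (hid : ∀ k, IdentDistrib (X k) (X 0) μ μ) (hX0 : ∀ k, ∀ᵐ ω ∂μ, 0 ≤ X k ω)
    (hX2 : MemLp (X 0) 2 μ) {t : ℝ} (ht : 0 < t) (n : ℕ) :
    t ^ n * mgf (X 0) μ (-(n / t)) ^ n
        - n ^ 3 * (∫ ω, X 0 ω ^ 2 ∂μ) * t ^ n / t ^ 2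
          * mgf (X 0) μ (-((n - 1 : ℕ) / t)) ^ (n - 1)
      ≤ ∫ ω, max (t - pSum X n ω) 0 ^ n ∂μ := by
  have := hiid.isProbabilityMeasure
  have hS : AEMeasurable (pSum X n) μ :=
    Finset.aemeasurable_fun_sum _ fun i _ => (hid i).aemeasurable_fst
  have hS0 := ae_sum_nonneg hX0 (Finset.range n)
  have hθ : 0 ≤ ((n - 1 : ℕ) : ℝ) / t := by positivity
  have hexp : Integrable (fun ω => t ^ n * exp (-(n / t) * pSum X n ω)) μ :=
    (integrable_const _).mul_exp_neg_mul hS hS0 (by positivity)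
  have hsq : Integrable
      (fun ω => pSum X n ω ^ 2 * exp (-(((n - 1 : ℕ) : ℝ) / t) * pSum X n ω)) μ :=
    (memLp_finsetSum _ fun i _ => (hid i).memLp_iff.2 hX2).integrable_sq.mul_exp_neg_mul
      hS hS0 hθ
  have hmax : Integrable (fun ω => max (t - pSum X n ω) 0 ^ n) μ := by
    refine hexp.mono' (((aemeasurable_const.sub hS).max aemeasurable_const).pow_const n
      |>.aestronglyMeasurable) (ae_of_all _ fun ω => ?_)
    rw [norm_of_nonneg (by positivity)]
    exact max_sub_pow_le_mul_exp ht n _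
  calc t ^ n * mgf (X 0) μ (-(n / t)) ^ n
        - n ^ 3 * (∫ ω, X 0 ω ^ 2 ∂μ) * t ^ n / t ^ 2
          * mgf (X 0) μ (-((n - 1 : ℕ) / t)) ^ (n - 1)
      ≤ t ^ n * mgf (X 0) μ (-(n / t)) ^ n - n * t ^ n / t ^ 2 *
          ∫ ω, pSum X n ω ^ 2 * exp (-(((n - 1 : ℕ) : ℝ) / t) * pSum X n ω) ∂μ := by
        have := integral_sq_pSum_mul_exp_neg_le hiid hid hX0 hX2 n hθ
        have hc : 0 ≤ n * t ^ n / t ^ 2 := by positivity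
        exact sub_le_sub_left ((mul_le_mul_of_nonneg_left this hc).trans_eq (by ring)) _
    _ = ∫ ω, (t ^ n * exp (-(n / t) * pSum X n ω) - n * t ^ n / t ^ 2 *
          (pSum X n ω ^ 2 * exp (-(((n - 1 : ℕ) : ℝ) / t) * pSum X n ω))) ∂μ := by
        rw [integral_sub hexp (hsq.const_mul _), integral_const_mul, integral_const_mul,
          ← mgf_pSum hiid hid]
        rfl
    _ ≤ ∫ ω, max (t - pSum X n ω) 0 ^ n ∂μ := by
        refine integral_mono_ae (hexp.sub (hsq.const_mul _)) hmax ?_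
        filter_upwards [hS0] with ω hω using mul_exp_sub_le_max_sub_pow ht n hω

lemma integral_max_sub_pSum_pow_div_le (hiid : iIndepFun X μ)
    (hid : ∀ k, IdentDistrib (X k) (X 0) μ μ) (hX0 : ∀ k, ∀ᵐ ω ∂μ, 0 ≤ X k ω)
    {t : ℝ} (ht : 0 < t) (n : ℕ) :
    (∫ ω, max (t - pSum X n ω) 0 ^ n ∂μ) / (t ^ n * exp (-(∫ ω, X 0 ω ∂μ) * n ^ 2 / t))
      ≤ mgf (X 0) μ (-(n / t)) ^ n * exp ((∫ ω, X 0 ω ∂μ) * n ^ 2 / t) := by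
  rw [div_le_iff₀ (by positivity)]
  refine (integral_max_sub_pSum_pow_le hiid hid hX0 ht n).trans_eq ?_
  rw [neg_mul, neg_div, exp_neg]
  field_simp

lemma le_integral_max_sub_pSum_pow_div (hiid : iIndepFun X μ)
    (hid : ∀ k, IdentDistrib (X k) (X 0) μ μ) (hX0 : ∀ k, ∀ᵐ ω ∂μ, 0 ≤ X k ω)
    (hX2 : MemLp (X 0) 2 μ) {t : ℝ} (ht : 0 < t) (n : ℕ) :
    mgf (X 0) μ (-(n / t)) ^ n * exp ((∫ ω, X 0 ω ∂μ) * n ^ 2 / t)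
        - (∫ ω, X 0 ω ^ 2 ∂μ) * (n ^ 3 / t ^ 2)
          * (mgf (X 0) μ (-((n - 1 : ℕ) / t)) ^ (n - 1)
            * exp ((∫ ω, X 0 ω ∂μ) * ((n - 1 : ℕ) : ℝ) ^ 2 / t))
          * exp ((∫ ω, X 0 ω ∂μ) * ((n ^ 2 - ((n - 1 : ℕ) : ℝ) ^ 2) / t))
      ≤ (∫ ω, max (t - pSum X n ω) 0 ^ n ∂μ)
          / (t ^ n * exp (-(∫ ω, X 0 ω ∂μ) * n ^ 2 / t)) := by
  rw [le_div_iff₀ (by positivity)]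
  refine le_of_eq_of_le ?_ (le_integral_max_sub_pSum_pow hiid hid hX0 hX2 ht n)
  have hsplit : exp ((∫ ω, X 0 ω ∂μ) * ((n - 1 : ℕ) : ℝ) ^ 2 / t)
      * exp ((∫ ω, X 0 ω ∂μ) * ((n ^ 2 - ((n - 1 : ℕ) : ℝ) ^ 2) / t))
      = exp ((∫ ω, X 0 ω ∂μ) * n ^ 2 / t) := by
    rw [← exp_add]; ring_nf
  rw [neg_mul, neg_div, exp_neg, ← hsplit]
  field_simp

end

theorem expectation_positive_part_power_asymptotics_general
    (X : ℕ → Ω → ℝ)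
    (hiid : iIndepFun X ℙ)
    (hid : ∀ k, IdentDistrib (X k) (X 0) ℙ ℙ)
    (hnonneg : ∀ k, ∀ᵐ ω ∂ℙ, 0 ≤ X k ω)
    (hL2 : Integrable (fun ω => (pSum X 1 ω) ^ 2) ℙ)
    (γ₀ : ℝ) (hγ₀ : γ₀ = -∫ ω, pSum X 1 ω ∂ℙ)
    (j : ℝ → ℕ)
    (hjo : (fun t : ℝ => (j t : ℝ)) =o[atTop] fun t : ℝ => t ^ ((2 : ℝ) / 3)) :
    Tendsto
      (fun t : ℝ =>
        (∫ ω, (max (t - pSum X (j t) ω) 0) ^ j t ∂ℙ) /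
          (t ^ j t * Real.exp (γ₀ * (j t : ℝ) ^ 2 / t)))
      atTop (𝓝 1) := by
  have := hiid.isProbabilityMeasure
  have hS1 : pSum X 1 = X 0 := funext fun ω => Finset.sum_range_one _
  rw [hS1] at hL2 hγ₀
  subst hγ₀
  have hX2 : MemLp (X 0) 2 ℙ :=
    (memLp_two_iff_integrable_sq (hid 0).aemeasurable_fst.aestronglyMeasurable).2 hL2
  have hjo' : (fun t => ((j t - 1 : ℕ) : ℝ)) =o[atTop] fun t => t ^ (2 / 3 : ℝ) :=
    (IsBigO.of_bound 1 (Eventually.of_forall fun t => by simp)).trans_isLittleO hjo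
  have hU := tendsto_mgf_neg_div_pow_mul_exp (hnonneg 0) hX2 hjo
  have hU' := tendsto_mgf_neg_div_pow_mul_exp (hnonneg 0) hX2 hjo'
  have hj3 := tendsto_pow_three_div_sq_of_isLittleO_rpow_two_thirds hjo
  have hshift := ((tendsto_sq_sub_sq_pred_div
    (tendsto_div_of_isLittleO_rpow_two_thirds hjo)).const_mul (∫ ω, X 0 ω ∂ℙ)).rexp
  have hlow := hU.sub (((hj3.const_mul (∫ ω, X 0 ω ^ 2 ∂ℙ)).mul hU').mul hshift)
  simp only [mul_zero, zero_mul, exp_zero, sub_zero] at hlow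
  refine tendsto_of_tendsto_of_tendsto_of_le_of_le' hlow hU ?_ ?_
  · filter_upwards [eventually_gt_atTop 0] with t ht
    exact le_integral_max_sub_pSum_pow_div hiid hid hnonneg hX2 ht (j t)
  · filter_upwards [eventually_gt_atTop 0] with t ht
    exact integral_max_sub_pSum_pow_div_le hiid hid hnonneg ht (j t)

/-- **Proposition 3.6 (asymptotic part).** For a zero-delayed random walk `S̃` with
i.i.d. nonnegative increments such that `E S̃₁² < ∞`, with `γ₀ = -E S̃₁`, and any
integer-valued `j = j(t) ≥ 1` with `j(t) = o(t^{2/3})` as `t → ∞`,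
`E[((t - S̃_{j(t)})₊)^{j(t)}] ~ t^{j(t)} exp(γ₀ j(t)²/t)`. -/
theorem expectation_positive_part_power_asymptotics
    [IsProbabilityMeasure (ℙ : Measure Ω)]
    (X : ℕ → Ω → ℝ)
    (hmeas : ∀ k, Measurable (X k))
    (hiid : iIndepFun X ℙ)
    (hid : ∀ k, IdentDistrib (X k) (X 0) ℙ ℙ)
    (hnonneg : ∀ k, ∀ᵐ ω ∂ℙ, 0 ≤ X k ω)
    (hL2 : Integrable (fun ω => (pSum X 1 ω) ^ 2) ℙ)
    (γ₀ : ℝ) (hγ₀ : γ₀ = -∫ ω, pSum X 1 ω ∂ℙ)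
    (j : ℝ → ℕ) (hj1 : ∀ t, 1 ≤ j t)
    (hjo : (fun t : ℝ => (j t : ℝ)) =o[atTop] fun t : ℝ => t ^ ((2 : ℝ) / 3)) :
    Tendsto
      (fun t : ℝ =>
        (∫ ω, (max (t - pSum X (j t) ω) 0) ^ j t ∂ℙ) /
          (t ^ j t * Real.exp (γ₀ * (j t : ℝ) ^ 2 / t)))
      atTop (𝓝 1) :=
  expectation_positive_part_power_asymptotics_general X hiid hid hnonneg hL2 γ₀ hγ₀ j hjo

end
end

section
/- Let ξ and η be almost surely strictly positive random variables, and for z > 0 define μ(z) := inf_{s>0} e^{zs}·E[e^{−sη}]/(1 − E[e^{−sξ}]). Then γ := sup{z > 0 : μ(z) < 1} satisfies 0 < γ < ∞. In particular, lim_{z→0+} μ(z) = 0 and lim_{z→∞} μ(z) = ∞. -/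
/-!
Write `φ_X(s) = E[e^{-sX}] = mgf X P (-s)` and `r(s) = φ_η(s) / (1 - φ_ξ(s))` (`laplaceRatio`),
so that `μ(z) = inf_{s>0} e^{zs} r(s)` (`laplaceRatioInf`). Since `r(s) → 0` as `s → ∞`, a single
large `s` already makes `e^{zs} r(s)` small for all `z` near `0`. For `z → ∞`, small `s` are handled
by the blow-up `r(s) → ∞` as `s → 0+` together with the monotonicity of `r`, and large `s` by the
reverse Chernoff bound `φ_η(s) ≥ P(η ≤ c) e^{-sc}`, which makes `e^{zs} φ_η(s)` grow like
`e^{s(z - c)}`.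
-/

open MeasureTheory ProbabilityTheory Filter Set Real
open scoped Topology

noncomputable section

section LaplaceTransform

variable {Ω : Type*} [MeasurableSpace Ω] {P : Measure Ω} {X : Ω → ℝ} {t : ℝ}

lemma integrable_exp_mul_of_nonpos [IsFiniteMeasure P] (hX : AEMeasurable X P)
    (hX0 : ∀ᵐ ω ∂P, 0 ≤ X ω) (ht : t ≤ 0) : Integrable (fun ω => exp (t * X ω)) P :=
  .of_mem_Icc 0 1 (measurable_exp.comp_aemeasurable (hX.const_mul t)) <| by
    filter_upwards [hX0] with ω hω
    exact ⟨(exp_pos _).le, exp_le_one_iff.2 (mul_nonpos_of_nonpos_of_nonneg ht hω)⟩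

lemma mgf_le_one_of_nonpos [IsProbabilityMeasure P] (hX0 : ∀ᵐ ω ∂P, 0 ≤ X ω) (ht : t ≤ 0) :
    mgf X P t ≤ 1 := by
  simpa [mgf_zero_fun] using mgf_anti_of_nonpos (X := 0) hX0 ht (by simp)

lemma mgf_lt_one_of_neg [IsProbabilityMeasure P] (hX : AEMeasurable X P)
    (hX0 : ∀ᵐ ω ∂P, 0 < X ω) (ht : t < 0) : mgf X P t < 1 := by
  obtain ⟨ω, hω, hle⟩ := exists_notMem_null_integral_le
    (integrable_exp_mul_of_nonpos hX (hX0.mono fun _ h => h.le) ht.le) (ae_iff.1 hX0)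
  exact hle.trans_lt (exp_lt_one_iff.2 (mul_neg_of_neg_of_pos ht (not_not.1 hω)))

lemma monotoneOn_mgf_Iic [IsFiniteMeasure P] (hX : AEMeasurable X P)
    (hX0 : ∀ᵐ ω ∂P, 0 ≤ X ω) : MonotoneOn (mgf X P) (Iic 0) := by
  intro s hs t ht hst
  refine integral_mono_ae (integrable_exp_mul_of_nonpos hX hX0 hs)
    (integrable_exp_mul_of_nonpos hX hX0 ht) ?_
  filter_upwards [hX0] with ω hω using exp_le_exp.2 (mul_le_mul_of_nonneg_right hst hω)

lemma continuousOn_mgf_Iic [IsFiniteMeasure P] (hX : AEMeasurable X P)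
    (hX0 : ∀ᵐ ω ∂P, 0 ≤ X ω) : ContinuousOn (mgf X P) (Iic 0) := by
  refine continuousOn_of_dominated (bound := fun _ => 1) (fun t _ => aemeasurable_exp_mul t hX)
    (fun t ht => ?_) (integrable_const 1) (ae_of_all _ fun ω => by fun_prop)
  filter_upwards [hX0] with ω hω
  rw [norm_of_nonneg (exp_pos _).le]
  exact exp_le_one_iff.2 (mul_nonpos_of_nonpos_of_nonneg ht hω)

lemma tendsto_mgf_neg_nhdsGT_zero [IsProbabilityMeasure P] (hX : AEMeasurable X P)
    (hX0 : ∀ᵐ ω ∂P, 0 ≤ X ω) : Tendsto (fun s => mgf X P (-s)) (𝓝[>] 0) (𝓝 1) := by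
  have h := ((continuousOn_mgf_Iic hX hX0).continuousWithinAt (mem_Iic.2 le_rfl)).comp_of_eq
    continuous_neg.continuousWithinAt (s := Ioi 0) (fun s hs => neg_nonpos.2 (le_of_lt hs))
    neg_zero
  simpa only [ContinuousWithinAt, Function.comp_def, neg_zero, mgf_zero] using h

lemma tendsto_mgf_atBot [IsFiniteMeasure P] (hX : AEMeasurable X P) (hX0 : ∀ᵐ ω ∂P, 0 < X ω) :
    Tendsto (mgf X P) atBot (𝓝 0) := by
  have h := tendsto_integral_filter_of_dominated_convergence (fun _ => (1 : ℝ))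
    (Eventually.of_forall fun t => aemeasurable_exp_mul t hX) ?_ (integrable_const 1)
    (hX0.mono fun ω hω => tendsto_exp_atBot.comp (tendsto_id.atBot_mul_const hω))
  · rwa [integral_zero] at h
  filter_upwards [eventually_le_atBot 0] with t ht
  filter_upwards [hX0] with ω hω
  rw [norm_of_nonneg (exp_pos _).le]
  exact exp_le_one_iff.2 (mul_nonpos_of_nonpos_of_nonneg ht hω.le)

lemma exists_mul_exp_le_mgf [IsProbabilityMeasure P] (hX : AEMeasurable X P)
    (hX0 : ∀ᵐ ω ∂P, 0 ≤ X ω) :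
    ∃ c p : ℝ, 0 < p ∧ ∀ t ≤ 0, p * exp (t * c) ≤ mgf X P t := by
  obtain ⟨n, hn⟩ : ∃ n : ℕ, P {ω | X ω ≤ n} ≠ 0 := by
    by_contra! h
    have hcover : ⋃ n : ℕ, {ω | X ω ≤ n} = univ :=
      iUnion_eq_univ_iff.2 fun ω => exists_nat_ge (X ω)
    have hU : P (⋃ n : ℕ, {ω | X ω ≤ n}) = 0 := measure_iUnion_null_iff.2 h
    rw [hcover] at hU
    exact NeZero.ne P (Measure.measure_univ_eq_zero.1 hU)
  refine ⟨n, P.real {ω | X ω ≤ n}, ENNReal.toReal_pos hn (measure_ne_top _ _), fun t ht => ?_⟩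
  have chernoff := measure_le_le_exp_mul_mgf (n : ℝ) ht (integrable_exp_mul_of_nonpos hX hX0 ht)
  rwa [neg_mul, exp_neg, ← div_eq_inv_mul, le_div_iff₀ (exp_pos _)] at chernoff

end LaplaceTransform

section LaplaceRatio

variable {Ω : Type*} [MeasurableSpace Ω] {P : Measure Ω} {ξ η : Ω → ℝ} {s z : ℝ}

def laplaceRatio (P : Measure Ω) (ξ η : Ω → ℝ) (s : ℝ) : ℝ :=
  mgf η P (-s) / (1 - mgf ξ P (-s))

def laplaceRatioInf (P : Measure Ω) (ξ η : Ω → ℝ) (z : ℝ) : ℝ :=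
  ⨅ s : Ioi (0 : ℝ), exp (z * s) * laplaceRatio P ξ η s

lemma le_laplaceRatioInf {M : ℝ} (h : ∀ s, 0 < s → M ≤ exp (z * s) * laplaceRatio P ξ η s) :
    M ≤ laplaceRatioInf P ξ η z :=
  le_ciInf fun s => h s s.2

variable [IsProbabilityMeasure P]

lemma laplaceRatio_nonneg (hξ0 : ∀ᵐ ω ∂P, 0 ≤ ξ ω) (hs : 0 ≤ s) : 0 ≤ laplaceRatio P ξ η s :=
  div_nonneg mgf_nonneg (sub_nonneg.2 (mgf_le_one_of_nonpos hξ0 (neg_nonpos.2 hs)))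

lemma one_sub_mgf_neg_pos (hξ : AEMeasurable ξ P) (hξ0 : ∀ᵐ ω ∂P, 0 < ξ ω) (hs : 0 < s) :
    0 < 1 - mgf ξ P (-s) :=
  sub_pos.2 (mgf_lt_one_of_neg hξ hξ0 (neg_neg_of_pos hs))

lemma laplaceRatioInf_le (hξ0 : ∀ᵐ ω ∂P, 0 ≤ ξ ω) (hs : 0 < s) :
    laplaceRatioInf P ξ η z ≤ exp (z * s) * laplaceRatio P ξ η s :=
  ciInf_le ⟨0, forall_mem_range.2 fun t =>
    mul_nonneg (exp_pos _).le (laplaceRatio_nonneg hξ0 (le_of_lt t.2))⟩ (⟨s, hs⟩ : Ioi (0 : ℝ))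

lemma laplaceRatioInf_nonneg (hξ0 : ∀ᵐ ω ∂P, 0 ≤ ξ ω) : 0 ≤ laplaceRatioInf P ξ η z :=
  Real.iInf_nonneg fun s => mul_nonneg (exp_pos _).le (laplaceRatio_nonneg hξ0 (le_of_lt s.2))

lemma tendsto_laplaceRatio_atTop (hξ : AEMeasurable ξ P) (hξ0 : ∀ᵐ ω ∂P, 0 < ξ ω)
    (hη : AEMeasurable η P) (hη0 : ∀ᵐ ω ∂P, 0 < η ω) :
    Tendsto (laplaceRatio P ξ η) atTop (𝓝 0) := by
  have hA := (tendsto_mgf_atBot hη hη0).comp tendsto_neg_atTop_atBot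
  have hB := (tendsto_mgf_atBot hξ hξ0).comp tendsto_neg_atTop_atBot
  have h := hA.div (tendsto_const_nhds.sub hB) (by norm_num : (1 : ℝ) - 0 ≠ 0)
  rwa [sub_zero, zero_div] at h

lemma tendsto_laplaceRatio_nhdsGT_zero (hξ : AEMeasurable ξ P) (hξ0 : ∀ᵐ ω ∂P, 0 < ξ ω)
    (hη : AEMeasurable η P) (hη0 : ∀ᵐ ω ∂P, 0 ≤ η ω) :
    Tendsto (laplaceRatio P ξ η) (𝓝[>] 0) atTop := by
  have hden : Tendsto (fun s => 1 - mgf ξ P (-s)) (𝓝[>] 0) (𝓝[>] 0) := by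
    refine tendsto_nhdsWithin_iff.2 ⟨?_, eventually_nhdsWithin_of_forall fun s hs =>
      one_sub_mgf_neg_pos hξ hξ0 hs⟩
    have h := (tendsto_const_nhds (x := (1 : ℝ))).sub
      (tendsto_mgf_neg_nhdsGT_zero hξ (hξ0.mono fun _ h => h.le))
    rwa [sub_self] at h
  exact (tendsto_mgf_neg_nhdsGT_zero hη hη0).pos_mul_atTop one_pos
    (tendsto_inv_nhdsGT_zero.comp hden)

lemma antitoneOn_laplaceRatio (hξ : AEMeasurable ξ P) (hξ0 : ∀ᵐ ω ∂P, 0 < ξ ω)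
    (hη : AEMeasurable η P) (hη0 : ∀ᵐ ω ∂P, 0 ≤ η ω) :
    AntitoneOn (laplaceRatio P ξ η) (Ioi 0) := by
  intro s hs t ht hst
  have hξ0' : ∀ᵐ ω ∂P, 0 ≤ ξ ω := hξ0.mono fun _ h => h.le
  have hmono : ∀ {X : Ω → ℝ}, AEMeasurable X P → (∀ᵐ ω ∂P, 0 ≤ X ω) →
      mgf X P (-t) ≤ mgf X P (-s) := fun hX hX0 =>
    monotoneOn_mgf_Iic hX hX0 (mem_Iic.2 (neg_nonpos.2 (le_of_lt ht)))
      (mem_Iic.2 (neg_nonpos.2 (le_of_lt hs))) (neg_le_neg hst)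
  exact div_le_div₀ mgf_nonneg (hmono hη hη0) (one_sub_mgf_neg_pos hξ hξ0 hs)
    (sub_le_sub_left (hmono hξ hξ0') 1)

lemma tendsto_laplaceRatioInf_nhds_zero (hξ : AEMeasurable ξ P) (hξ0 : ∀ᵐ ω ∂P, 0 < ξ ω)
    (hη : AEMeasurable η P) (hη0 : ∀ᵐ ω ∂P, 0 < η ω) :
    Tendsto (laplaceRatioInf P ξ η) (𝓝 0) (𝓝 0) := by
  have hξ0' : ∀ᵐ ω ∂P, 0 ≤ ξ ω := hξ0.mono fun _ h => h.le
  refine tendsto_order.2 ⟨fun a ha => Eventually.of_forall fun z =>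
    ha.trans_le (laplaceRatioInf_nonneg hξ0'), fun ε hε => ?_⟩
  obtain ⟨s, hsε, hs⟩ := (((tendsto_laplaceRatio_atTop hξ hξ0 hη hη0).eventually
    (gt_mem_nhds hε)).and (eventually_gt_atTop 0)).exists
  have hcont : Tendsto (fun z => exp (z * s) * laplaceRatio P ξ η s) (𝓝 0)
      (𝓝 (laplaceRatio P ξ η s)) := by
    simpa using ((continuous_exp.comp (continuous_mul_const s)).tendsto 0).mul_const
      (laplaceRatio P ξ η s)
  filter_upwards [hcont.eventually (gt_mem_nhds hsε)] with z hz
  exact (laplaceRatioInf_le hξ0' hs).trans_lt hz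

lemma laplaceRatio_le_exp_mul (hξ0 : ∀ᵐ ω ∂P, 0 ≤ ξ ω) (hz : 0 ≤ z) (hs : 0 ≤ s) :
    laplaceRatio P ξ η s ≤ exp (z * s) * laplaceRatio P ξ η s :=
  le_mul_of_one_le_left (laplaceRatio_nonneg hξ0 hs) (one_le_exp (mul_nonneg hz hs))

lemma mul_exp_le_exp_mul_laplaceRatio (hξ : AEMeasurable ξ P) (hξ0 : ∀ᵐ ω ∂P, 0 < ξ ω)
    {c p s₀ : ℝ} (hp : 0 ≤ p) (hlow : ∀ t ≤ 0, p * exp (t * c) ≤ mgf η P t)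
    (hz : c ≤ z) (hs₀ : 0 < s₀) (hs : s₀ ≤ s) :
    p * exp (s₀ * (z - c)) ≤ exp (z * s) * laplaceRatio P ξ η s := by
  have hs0 : 0 < s := hs₀.trans_le hs
  calc p * exp (s₀ * (z - c)) ≤ p * exp (s * (z - c)) := by gcongr
    _ = exp (z * s) * (p * exp (-s * c)) := by rw [mul_left_comm, ← exp_add]; ring_nf
    _ ≤ exp (z * s) * mgf η P (-s) := by gcongr; exact hlow _ (by linarith)
    _ ≤ exp (z * s) * laplaceRatio P ξ η s := by
      gcongr
      exact le_div_self mgf_nonneg (one_sub_mgf_neg_pos hξ hξ0 hs0)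
        (sub_le_self _ mgf_nonneg)

lemma tendsto_laplaceRatioInf_atTop (hξ : AEMeasurable ξ P) (hξ0 : ∀ᵐ ω ∂P, 0 < ξ ω)
    (hη : AEMeasurable η P) (hη0 : ∀ᵐ ω ∂P, 0 ≤ η ω) :
    Tendsto (laplaceRatioInf P ξ η) atTop atTop := by
  refine tendsto_atTop.2 fun M => ?_
  obtain ⟨c, p, hp, hlow⟩ := exists_mul_exp_le_mgf hη hη0
  obtain ⟨s₀, hs₀M, hs₀⟩ := (((tendsto_laplaceRatio_nhdsGT_zero hξ hξ0 hη hη0).eventually_ge_atTop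
    M).and self_mem_nhdsWithin).exists
  have hgrow : Tendsto (fun z => p * exp (s₀ * (z - c))) atTop atTop :=
    (tendsto_exp_atTop.comp ((tendsto_atTop_add_const_right _ (-c) tendsto_id).const_mul_atTop
      hs₀)).const_mul_atTop hp
  filter_upwards [hgrow.eventually_ge_atTop M, eventually_ge_atTop c, eventually_ge_atTop 0]
    with z hzM hzc hz0
  refine le_laplaceRatioInf fun s hs => ?_
  rcases le_total s s₀ with hss₀ | hs₀s
  · calc M ≤ laplaceRatio P ξ η s₀ := hs₀M
      _ ≤ laplaceRatio P ξ η s := antitoneOn_laplaceRatio hξ hξ0 hη hη0 hs hs₀ hss₀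
      _ ≤ exp (z * s) * laplaceRatio P ξ η s :=
        laplaceRatio_le_exp_mul (hξ0.mono fun _ h => h.le) hz0 hs.le
  · exact hzM.trans (mul_exp_le_exp_mul_laplaceRatio hξ hξ0 hp.le hlow hzc hs₀ hs₀s)

end LaplaceRatio

variable {Ω : Type*} [MeasureSpace Ω]

/-- **Proposition 2.1 (the constant `γ`).** For a.s. strictly positive `ξ, η` and
`μ(z) = inf_{s>0} e^{zs} E[e^{-sη}]/(1 - E[e^{-sξ}])`, the quantity
`γ = sup{z > 0 : μ(z) < 1}` satisfies `0 < γ < ∞`; in particular `μ(z) → 0` as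
`z → 0+` and `μ(z) → ∞` as `z → ∞`. -/
theorem gamma_positive_finite
    [IsProbabilityMeasure (ℙ : Measure Ω)]
    (ξ η : Ω → ℝ)
    (hmξ : Measurable ξ) (hmη : Measurable η)
    (hposξ : ∀ᵐ ω ∂ℙ, 0 < ξ ω) (hposη : ∀ᵐ ω ∂ℙ, 0 < η ω)
    (μ : ℝ → ℝ)
    (hμ : ∀ z : ℝ, μ z =
      ⨅ s : Ioi (0 : ℝ),
        Real.exp (z * (s : ℝ)) * (∫ ω, Real.exp (-(s : ℝ) * η ω) ∂ℙ) /
          (1 - ∫ ω, Real.exp (-(s : ℝ) * ξ ω) ∂ℙ))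
    (γ : ℝ) (hγ : γ = sSup {z : ℝ | 0 < z ∧ μ z < 1}) :
    (0 < γ ∧ BddAbove {z : ℝ | 0 < z ∧ μ z < 1} ∧
      {z : ℝ | 0 < z ∧ μ z < 1}.Nonempty) ∧
    Tendsto μ (𝓝[>] 0) (𝓝 0) ∧ Tendsto μ atTop atTop := by
  have hμ_eq : μ = laplaceRatioInf ℙ ξ η := funext fun z => by
    rw [hμ z, laplaceRatioInf]
    simp only [laplaceRatio, mul_div_assoc]
    rfl
  subst hμ_eq hγ
  have hzero : Tendsto (laplaceRatioInf ℙ ξ η) (𝓝[>] 0) (𝓝 0) :=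
    (tendsto_laplaceRatioInf_nhds_zero hmξ.aemeasurable hposξ hmη.aemeasurable hposη).mono_left
      nhdsWithin_le_nhds
  have htop := tendsto_laplaceRatioInf_atTop hmξ.aemeasurable hposξ hmη.aemeasurable
    (hposη.mono fun _ h => h.le)
  obtain ⟨z, hz1, hz0⟩ := ((hzero.eventually (gt_mem_nhds one_pos)).and self_mem_nhdsWithin).exists
  obtain ⟨Z, hZ⟩ := eventually_atTop.1 (htop.eventually_ge_atTop 1)
  have hbdd : BddAbove {z | 0 < z ∧ laplaceRatioInf ℙ ξ η z < 1} :=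
    ⟨Z, fun y hy => le_of_not_ge fun hZy => (hZ y hZy).not_gt hy.2⟩
  exact ⟨⟨lt_of_lt_of_le hz0 (le_csSup hbdd ⟨hz0, hz1⟩), hbdd, z, hz0, hz1⟩, hzero, htop⟩
end
end
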